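/- Let T = max_k r_k + max_i ∑_k L_{ik} + max_j ∑_k L_{jk} − 1, where r_k ≥ 0 are release times and L_{ik}, L_{jk} the port loads of coflow k. Then any work-conserving schedule (one that never idles a port-pair (i,j) while some released flow on link (i,j) is unfinished and the ports are free) completes all flows by time T+1. -/
import Mathlib


/-- Time-horizon bound: with
`T = max_k r_k + max_i ∑_k L_{ik} + max_j ∑_k L_{jk} − 1`,
any work-conserving schedule (never idling both ports of a link while some
released flow on that link is unfinished) completes all flows by time `T + 1`.
Here `rate i j k s` is the amount of flow `(i,j,k)` transmitted in slot
`(s, s+1]`. -/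
theorem stmt16 (N n : ℕ) (hN : 0 < N) (hn : 0 < n)
    (d : Fin N → Fin N → Fin n → ℝ) (hd : ∀ i j k, 0 ≤ d i j k)
    (r : Fin n → ℕ)
    (rate : Fin N → Fin N → Fin n → ℕ → ℝ)
    (hnn : ∀ i j k s, 0 ≤ rate i j k s)
    (hrel : ∀ i j k s, s < r k → rate i j k s = 0)
    (hin : ∀ i s, ∑ j, ∑ k, rate i j k s ≤ 1)
    (hout : ∀ j s, ∑ i, ∑ k, rate i j k s ≤ 1)
    (hdem : ∀ i j k s, ∑ u ∈ Finset.range s, rate i j k u ≤ d i j k)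
    -- work conservation: if some released flow on link (i,j) is unfinished at
    -- slot s, then port i or port j is fully busy during slot s
    (hwc : ∀ i j s, (∃ k, r k ≤ s ∧ ∑ u ∈ Finset.range s, rate i j k u < d i j k) →
      (∑ j', ∑ k, rate i j' k s) = 1 ∨ (∑ i', ∑ k, rate i' j k s) = 1) :
    haveI : Nonempty (Fin N) := ⟨⟨0, hN⟩⟩
    haveI : Nonempty (Fin n) := ⟨⟨0, hn⟩⟩
    ∀ M : ℕ,
      ((Finset.univ.sup' Finset.univ_nonempty fun k => ((r k : ℝ))) +
        (Finset.univ.sup' Finset.univ_nonempty fun i => ∑ k, ∑ j, d i j k) +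
        (Finset.univ.sup' Finset.univ_nonempty fun j => ∑ k, ∑ i, d i j k) - 1) + 1
          ≤ (M : ℝ) →
      ∀ i j k, ∑ u ∈ Finset.range M, rate i j k u = d i j k := by
  haveI : Nonempty (Fin N) := ⟨⟨0, hN⟩⟩
  haveI : Nonempty (Fin n) := ⟨⟨0, hn⟩⟩
  intro M hM i j k
  set R : ℝ := Finset.univ.sup' Finset.univ_nonempty fun k => ((r k : ℝ)) with hR
  set A : ℝ := Finset.univ.sup' Finset.univ_nonempty fun i => ∑ k, ∑ j, d i j k with hA
  set B : ℝ := Finset.univ.sup' Finset.univ_nonempty fun j => ∑ k, ∑ i, d i j k with hB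
  have hMge : R + A + B ≤ (M : ℝ) := by linarith
  by_contra hne
  have hlt : ∑ u ∈ Finset.range M, rate i j k u < d i j k :=
    lt_of_le_of_ne (hdem i j k M) hne
  have hrk : (r k : ℝ) ≤ R := Finset.le_sup' (fun k => ((r k : ℝ))) (Finset.mem_univ k)
  have hAi : ∑ k, ∑ j', d i j' k ≤ A := Finset.le_sup' (fun i => ∑ k, ∑ j, d i j k) (Finset.mem_univ i)
  have hBj : ∑ k, ∑ i', d i' j k ≤ B := Finset.le_sup' (fun j => ∑ k, ∑ i, d i j k) (Finset.mem_univ j)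
  have hdnn : (0:ℝ) ≤ A + B := by
    have : (0:ℝ) ≤ ∑ k, ∑ j', d i j' k :=
      Finset.sum_nonneg fun _ _ => Finset.sum_nonneg fun _ _ => hd _ _ _
    have h2 : (0:ℝ) ≤ ∑ k, ∑ i', d i' j k :=
      Finset.sum_nonneg fun _ _ => Finset.sum_nonneg fun _ _ => hd _ _ _
    linarith
  have hrM : r k ≤ M := by
    have : (r k : ℝ) ≤ (M : ℝ) := by linarith
    exact_mod_cast this
  -- busy in every slot s ∈ [r k, M]
  have hbusy : ∀ s ∈ Finset.Icc (r k) M,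
      (1:ℝ) ≤ (∑ j', ∑ k', rate i j' k' s) + (∑ i', ∑ k', rate i' j k' s) := by
    intro s hs
    rw [Finset.mem_Icc] at hs
    have hpart : ∑ u ∈ Finset.range s, rate i j k u < d i j k := by
      refine lt_of_le_of_lt ?_ hlt
      exact Finset.sum_le_sum_of_subset_of_nonneg
        (Finset.range_subset_range.2 hs.2) (fun u _ _ => hnn i j k u)
    have h1 : (0:ℝ) ≤ ∑ j', ∑ k', rate i j' k' s :=
      Finset.sum_nonneg fun _ _ => Finset.sum_nonneg fun _ _ => hnn _ _ _ _
    have h2 : (0:ℝ) ≤ ∑ i', ∑ k', rate i' j k' s :=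
      Finset.sum_nonneg fun _ _ => Finset.sum_nonneg fun _ _ => hnn _ _ _ _
    rcases hwc i j s ⟨k, hs.1, hpart⟩ with h | h
    · linarith
    · linarith
  have hcard : ((M + 1 - r k : ℕ) : ℝ) ≤
      ∑ s ∈ Finset.Icc (r k) M,
        ((∑ j', ∑ k', rate i j' k' s) + (∑ i', ∑ k', rate i' j k' s)) := by
    calc ((M + 1 - r k : ℕ) : ℝ)
        = ∑ s ∈ Finset.Icc (r k) M, (1:ℝ) := by
          rw [Finset.sum_const, Nat.card_Icc, nsmul_eq_mul, mul_one]
      _ ≤ _ := Finset.sum_le_sum hbusy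
  have hsub : ∑ s ∈ Finset.Icc (r k) M,
        ((∑ j', ∑ k', rate i j' k' s) + (∑ i', ∑ k', rate i' j k' s)) ≤
      ∑ s ∈ Finset.range (M + 1),
        ((∑ j', ∑ k', rate i j' k' s) + (∑ i', ∑ k', rate i' j k' s)) := by
    refine Finset.sum_le_sum_of_subset_of_nonneg ?_ ?_
    · intro s hs
      rw [Finset.mem_Icc] at hs
      exact Finset.mem_range.2 (Nat.lt_succ_of_le hs.2)
    · intro s _ _
      have h1 : (0:ℝ) ≤ ∑ j', ∑ k', rate i j' k' s :=
        Finset.sum_nonneg fun _ _ => Finset.sum_nonneg fun _ _ => hnn _ _ _ _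
      have h2 : (0:ℝ) ≤ ∑ i', ∑ k', rate i' j k' s :=
        Finset.sum_nonneg fun _ _ => Finset.sum_nonneg fun _ _ => hnn _ _ _ _
      linarith
  have htot : ∑ s ∈ Finset.range (M + 1),
        ((∑ j', ∑ k', rate i j' k' s) + (∑ i', ∑ k', rate i' j k' s)) ≤ A + B := by
    rw [Finset.sum_add_distrib]
    have h1 : ∑ s ∈ Finset.range (M + 1), ∑ j', ∑ k', rate i j' k' s ≤
        ∑ k', ∑ j', d i j' k' := by
      rw [Finset.sum_comm]
      rw [show (∑ j', ∑ s ∈ Finset.range (M+1), ∑ k', rate i j' k' s) =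
          ∑ j', ∑ k', ∑ s ∈ Finset.range (M+1), rate i j' k' s from
        Finset.sum_congr rfl fun _ _ => Finset.sum_comm]
      rw [Finset.sum_comm]
      exact Finset.sum_le_sum fun k' _ => Finset.sum_le_sum fun j' _ => hdem i j' k' (M+1)
    have h2 : ∑ s ∈ Finset.range (M + 1), ∑ i', ∑ k', rate i' j k' s ≤
        ∑ k', ∑ i', d i' j k' := by
      rw [Finset.sum_comm]
      rw [show (∑ i', ∑ s ∈ Finset.range (M+1), ∑ k', rate i' j k' s) =
          ∑ i', ∑ k', ∑ s ∈ Finset.range (M+1), rate i' j k' s from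
        Finset.sum_congr rfl fun _ _ => Finset.sum_comm]
      rw [Finset.sum_comm]
      exact Finset.sum_le_sum fun k' _ => Finset.sum_le_sum fun i' _ => hdem i' j k' (M+1)
    linarith
  have hc : ((M + 1 - r k : ℕ) : ℝ) = (M : ℝ) + 1 - (r k : ℝ) := by
    rw [Nat.cast_sub (Nat.le_succ_of_le hrM)]
    push_cast
    ring
  rw [hc] at hcard
  linarith
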